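/- arXiv:1701.08653 — 3 statements merged into one kernel-verified Lean document; each statement's English description precedes it below -/
import Mathlib

section
/- Let A be a C*-algebra and V a closed linear subspace of A such that the closed linear span of V*VV*V is contained in the closed linear span of V*V. Then V is contained in the closed linear span of VV*V. -/
open scoped Pointwise

/-- The closed linear span of a subset of a C*-algebra. -/
noncomputable def cspan {A : Type*} [NonUnitalCStarAlgebra A] (S : Set A) : Submodule ℂ A :=
  (Submodule.span ℂ S).topologicalClosure

/-- The product of two subsets in the quantale `Max A`: the closed linear span of
the set of pointwise products. -/
noncomputable def qmul {A : Type*} [NonUnitalCStarAlgebra A] (V W : Set A) : Submodule ℂ A :=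
  cspan (V * W)

/-! For `a ∈ V`, the elements `e = f (a⋆a)` of the C⋆-algebra generated by `a⋆a` act as a right
approximate unit for `a`: with `f t = t / (ε + t)`,
`‖a - a e‖² = ‖(a⋆a)(1 - e)²‖ ≤ sup_{t ≥ 0} t ε² / (ε + t)² = ε / 4`.
The hypothesis makes the closed span `B` of `V⋆V` a C⋆-subalgebra containing `a⋆a`, so every such
`e` lies in `B` and `a e ∈ [V B] ⊆ [VV⋆V]`; the latter is closed, hence contains `a`. -/

section CStarAlgebra

variable {A : Type*} [NonUnitalCStarAlgebra A]

lemma nonneg_of_mem_quasispectrum_star_mul_self (a : A) {t : ℝ}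
    (ht : t ∈ quasispectrum ℝ (star a * a)) : 0 ≤ t :=
  -- `A` carries no order; the spectral order is used only to know that `star a * a ≥ 0`.
  letI := CStarAlgebra.spectralOrder A
  haveI := CStarAlgebra.spectralOrderedRing A
  quasispectrum_nonneg_of_nonneg _ (star_mul_self_nonneg a) t ht

lemma norm_sub_mul_cfcₙ_sq (a : A) {f : ℝ → ℝ}
    (hf : ContinuousOn f (quasispectrum ℝ (star a * a))) (hf0 : f 0 = 0) :
    ‖a - a * cfcₙ f (star a * a)‖ ^ 2 = ‖cfcₙ (fun t => t * (1 - f t) ^ 2) (star a * a)‖ := by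
  set b := star a * a
  set c := cfcₙ f b
  have hc : star c = c := (cfcₙ_predicate f b).star_eq
  have : cfcₙ (fun t => t * (1 - f t) ^ 2) b = b - b * c - c * b + c * (b * c) := by
    rw [show (fun t => t * (1 - f t) ^ 2) = fun t => t - t * f t - f t * t + f t * (t * f t) by
      ext; ring]
    rw [cfcₙ_add _ _ b, cfcₙ_sub _ _ b, cfcₙ_sub _ _ b, cfcₙ_mul _ _ b, cfcₙ_mul _ _ b,
      cfcₙ_mul _ _ b, cfcₙ_mul _ _ b, cfcₙ_id' ℝ b]
  rw [this, sq, ← CStarRing.norm_star_mul_self, star_sub, star_mul, hc]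
  simp only [b]
  noncomm_ring

lemma mul_one_sub_div_add_sq_le {ε t : ℝ} (hε : 0 < ε) (ht : 0 ≤ t) :
    t * (1 - t / (ε + t)) ^ 2 ≤ ε / 4 := by
  have hpos : 0 < ε + t := by linarith
  rw [one_sub_div hpos.ne', add_sub_cancel_right, div_pow, mul_div_assoc',
    div_le_div_iff₀ (by positivity) (by norm_num)]
  nlinarith [sq_nonneg (ε - t), mul_pos hε hε]

lemma mem_closure_range_mul_cfcₙ (a : A) :
    a ∈ closure (Set.range fun f : ℝ → ℝ => a * cfcₙ f (star a * a)) := by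
  refine Metric.mem_closure_iff.2 fun δ hδ => ?_
  set f : ℝ → ℝ := fun t => t / (δ ^ 2 + t)
  have hf : ContinuousOn f (quasispectrum ℝ (star a * a)) :=
    continuousOn_id.div (continuousOn_const.add continuousOn_id) fun t ht =>
      (add_pos_of_pos_of_nonneg (by positivity)
        (nonneg_of_mem_quasispectrum_star_mul_self a ht)).ne'
  refine ⟨_, ⟨f, rfl⟩, ?_⟩
  have hsq : ‖a - a * cfcₙ f (star a * a)‖ ^ 2 < δ ^ 2 := by
    rw [norm_sub_mul_cfcₙ_sq a hf (by simp [f])]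
    refine (norm_cfcₙ_le fun t ht => ?_).trans_lt (by linarith [pow_pos hδ 2] : δ ^ 2 / 4 < δ ^ 2)
    have ht0 := nonneg_of_mem_quasispectrum_star_mul_self a ht
    rw [Real.norm_of_nonneg (by positivity)]
    exact mul_one_sub_div_add_sq_le (by positivity) ht0
  rw [dist_eq_norm]
  exact lt_of_pow_lt_pow_left₀ 2 hδ.le hsq

end CStarAlgebra

section ClosedSpan

variable {A : Type*} [NonUnitalCStarAlgebra A]

lemma subset_cspan (S : Set A) : S ⊆ cspan S :=
  Submodule.subset_span.trans (Submodule.le_topologicalClosure _)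

lemma isClosed_cspan (S : Set A) : IsClosed (cspan S : Set A) :=
  Submodule.isClosed_topologicalClosure _

lemma cspan_le {S : Set A} {W : Submodule ℂ A} (hS : S ⊆ W) (hW : IsClosed (W : Set A)) :
    cspan S ≤ W :=
  Submodule.topologicalClosure_minimal _ (Submodule.span_le.2 hS) hW

lemma star_mem_cspan {S : Set A} {x : A} (hx : x ∈ cspan S) : star x ∈ cspan (star S) :=
  cspan_le (W := (cspan (star S)).comap (starLinearEquiv ℂ (A := A)).toLinearMap)
    (fun _ hs => subset_cspan _ (Set.star_mem_star.2 hs))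
    ((isClosed_cspan _).preimage continuous_star) hx

lemma star_mem_qmul {U W : Set A} {x : A} (hx : x ∈ qmul U W) :
    star x ∈ qmul (star W) (star U) := by
  simpa only [qmul, Set.star_mul] using star_mem_cspan hx

lemma mul_mem_qmul_qmul {U W X : Set A} {a x : A} (ha : a ∈ U) (hx : x ∈ qmul W X) :
    a * x ∈ qmul (qmul U W) X := by
  have hle : cspan (W * X) ≤ (qmul (qmul U W) X).comap (LinearMap.mulLeft ℂ a) := by
    refine cspan_le ?_ ((isClosed_cspan _).preimage (continuous_const_mul a))
    rintro _ ⟨w, hw, y, hy, rfl⟩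
    rw [SetLike.mem_coe, Submodule.mem_comap, LinearMap.mulLeft_apply, ← mul_assoc]
    exact subset_cspan _ (Set.mul_mem_mul (subset_cspan _ (Set.mul_mem_mul ha hw)) hy)
  exact hle hx

noncomputable def starMulSubalgebra (V : Set A)
    (hV : (qmul (qmul (star V) V : Set A) (qmul (star V) V : Set A) : Set A) ⊆ qmul (star V) V) :
    NonUnitalStarSubalgebra ℂ A :=
  { qmul (star V) V with
    mul_mem' := fun hx hy => hV (subset_cspan _ (Set.mul_mem_mul hx hy))
    star_mem' := fun hx =>
      (by simpa only [star_star] using star_mem_qmul hx : _ ∈ qmul (star V) V) }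

end ClosedSpan

theorem stmt0_general {A : Type*} [NonUnitalCStarAlgebra A] (V : Submodule ℂ A)
    (h : (qmul (qmul (star (V : Set A)) (V : Set A) : Set A)
            (qmul (star (V : Set A)) (V : Set A) : Set A) : Set A)
          ⊆ (qmul (star (V : Set A)) (V : Set A) : Set A)) :
    (V : Set A) ⊆
      (qmul (qmul (V : Set A) (star (V : Set A)) : Set A) (V : Set A) : Set A) := by
  intro a ha
  have hB : IsClosed (starMulSubalgebra (V : Set A) h : Set A) := isClosed_cspan _
  have hab : star a * a ∈ starMulSubalgebra (V : Set A) h :=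
    subset_cspan _ (Set.mul_mem_mul (Set.star_mem_star.2 ha) ha)
  refine closure_minimal ?_ (isClosed_cspan _) (mem_closure_range_mul_cfcₙ a)
  rintro _ ⟨f, rfl⟩
  exact mul_mem_qmul_qmul ha (cfcₙ_mem (hs := hB) f hab)

/-- If the closed linear span of `V*VV*V` is contained in the closed linear span of `V*V`,
then `V ⊆` the closed linear span of `VV*V`. -/
theorem stmt0 {A : Type*} [NonUnitalCStarAlgebra A] (V : Submodule ℂ A)
    (hV : IsClosed (V : Set A))
    (h : (qmul (qmul (star (V : Set A)) (V : Set A) : Set A)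
            (qmul (star (V : Set A)) (V : Set A) : Set A) : Set A)
          ⊆ (qmul (star (V : Set A)) (V : Set A) : Set A)) :
    (V : Set A) ⊆
      (qmul (qmul (V : Set A) (star (V : Set A)) : Set A) (V : Set A) : Set A) :=
  stmt0_general V h
end

section
/- Let A be a C*-algebra. The involutive quantale Max A of closed linear subspaces of A is stably Gelfand: for every closed linear subspace V of A, if the closure of the linear span of VV*V is contained in V, then it equals V. -/
open scoped Pointwise

/-!
Let `W` be the closed span of `V V* V` and `a ∈ V`. With `x = a* a ≥ 0`, the elements
`u_δ = x (x + δ)⁻¹`, built by functional calculus, satisfy `‖a - a u_δ‖² = ‖g_δ(x)‖ ≤ δ / 4` for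
`g_δ(t) = t δ² / (t + δ)²`, so `a = lim a u_δ`. Each `a u_δ` lies in `W`: the continuous functions
`f` with `f(0) = 0` and `V f(x) ⊆ W` form a closed subalgebra (closed under products because
`W ≤ V`) containing the identity, since `V x ⊆ V V* V`; by Stone–Weierstrass it is everything.
-/

open scoped ContinuousMapZero
open Filter Topology

section

variable {A : Type*} [NonUnitalCStarAlgebra A]

lemma mul_mem_qmul {S T : Set A} {b c : A} (hb : b ∈ S) (hc : c ∈ T) : b * c ∈ qmul S T :=
  Submodule.le_topologicalClosure _ (Submodule.subset_span (Set.mul_mem_mul hb hc))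

lemma mul_cfcₙ_mem_of_mul_mem {V W : Submodule ℂ A} (hW : IsClosed (W : Set A)) (hWV : W ≤ V)
    {x : A} (hx : ∀ b ∈ V, b * x ∈ W) (f : ℝ → ℝ) {b : A} (hb : b ∈ V) :
    b * cfcₙ f x ∈ W := by
  have key (hsa : IsSelfAdjoint x) (g : C(quasispectrum ℝ x, ℝ)₀) :
      ∀ b ∈ V, b * cfcₙHom hsa g ∈ W := by
    induction g using ContinuousMapZero.induction_on_of_compact with
    | zero => simp
    | id => simpa only [cfcₙHom_id hsa]
    | star_id => simpa only [map_star, cfcₙHom_id hsa, hsa.star_eq]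
    | add f g hf hg => exact fun b hb ↦ by simpa [mul_add] using W.add_mem (hf b hb) (hg b hb)
    | mul f g hf hg => exact fun b hb ↦ by simpa [mul_assoc] using hg _ (hWV (hf b hb))
    | smul r f hf =>
      exact fun b hb ↦ by
        simpa only [map_smul, mul_smul_comm] using W.smul_of_tower_mem r (hf b hb)
    | frequently f hf =>
      exact fun b hb ↦ (hf.mono fun g hg ↦ hg b hb).mem_of_closed
        (hW.preimage ((continuous_const_mul b).comp (cfcₙHom_continuous hsa)))
  exact cfcₙ_cases (fun y ↦ ∀ b ∈ V, b * y ∈ W) x f (by simp) (fun _ _ hsa ↦ key hsa _) b hb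

lemma quasispectrum_star_mul_self_nonneg (a : A) :
    ∀ t ∈ quasispectrum ℝ (star a * a), 0 ≤ t := by
  rw [Unitization.quasispectrum_eq_spectrum_inr' ℝ ℂ, Unitization.inr_mul, Unitization.inr_star]
  exact spectrum_star_mul_self_nonneg

lemma norm_sub_mul_cfcₙ_div_add_sq_le (a : A) {δ : ℝ} (hδ : 0 < δ) :
    ‖a - a * cfcₙ (fun t ↦ t / (t + δ)) (star a * a)‖ ^ 2 ≤ δ / 4 := by
  set x := star a * a
  set f : ℝ → ℝ := fun t ↦ t / (t + δ)
  set u := cfcₙ f x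
  have hx := quasispectrum_star_mul_self_nonneg a
  have hf : ContinuousOn f (quasispectrum ℝ x) :=
    continuousOn_id.div (by fun_prop) fun t ht ↦ by have := hx t ht; positivity
  have hu : star u = u := (IsSelfAdjoint.cfcₙ (f := f)).star_eq
  have hcc : star (a - a * u) * (a - a * u) =
      cfcₙ (fun t ↦ t - t * f t - f t * t + f t * (t * f t)) x := by
    rw [cfcₙ_add .., cfcₙ_sub .., cfcₙ_sub .., cfcₙ_mul .., cfcₙ_mul .., cfcₙ_mul .., cfcₙ_mul ..,
      cfcₙ_id' ℝ x]
    simp only [star_sub, star_mul, hu, x, u]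
    noncomm_ring
  rw [sq, ← CStarRing.norm_star_mul_self, hcc]
  refine norm_cfcₙ_le fun t ht ↦ ?_
  have ht := hx t ht
  have hden : 0 < t + δ := by positivity
  have : t - t * f t - f t * t + f t * (t * f t) = t * δ ^ 2 / (t + δ) ^ 2 := by
    simp only [f]; field_simp; ring
  rw [this, Real.norm_eq_abs, abs_of_nonneg (by positivity), div_le_iff₀ (by positivity)]
  nlinarith [sq_nonneg (t - δ)]

lemma tendsto_mul_cfcₙ_div_add (a : A) :
    Tendsto (fun δ : ℝ ↦ a * cfcₙ (fun t ↦ t / (t + δ)) (star a * a)) (𝓝[>] 0) (𝓝 a) := by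
  rw [tendsto_iff_norm_sub_tendsto_zero]
  have hsqrt : Tendsto Real.sqrt (𝓝[>] 0) (𝓝 0) :=
    (Real.continuous_sqrt.tendsto' 0 0 Real.sqrt_zero).mono_left nhdsWithin_le_nhds
  refine squeeze_zero' (.of_forall fun _ ↦ norm_nonneg _) ?_ hsqrt
  filter_upwards [self_mem_nhdsWithin] with δ (hδ : 0 < δ)
  rw [norm_sub_rev, ← abs_norm]
  exact Real.abs_le_sqrt ((norm_sub_mul_cfcₙ_div_add_sq_le a hδ).trans (by linarith))

end

theorem stmt1_general {A : Type*} [NonUnitalCStarAlgebra A] (V : Submodule ℂ A)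
    (h : qmul (qmul (V : Set A) (star (V : Set A)) : Set A) (V : Set A) ≤ V) :
    qmul (qmul (V : Set A) (star (V : Set A)) : Set A) (V : Set A) = V := by
  refine le_antisymm h fun a ha ↦ ?_
  set W := qmul (qmul (V : Set A) (star (V : Set A)) : Set A) (V : Set A)
  have hW : IsClosed (W : Set A) := Submodule.isClosed_topologicalClosure _
  have hVa (b : A) (hb : b ∈ V) : b * (star a * a) ∈ W :=
    mul_assoc b (star a) a ▸ mul_mem_qmul (mul_mem_qmul hb (Set.star_mem_star.mpr ha)) ha
  exact hW.mem_of_tendsto (tendsto_mul_cfcₙ_div_add a)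
    (.of_forall fun _ ↦ mul_cfcₙ_mem_of_mul_mem hW h hVa _ ha)

/-- `Max A` is stably Gelfand: for a closed linear subspace `V`, if the closure of the
linear span of `VV*V` is contained in `V` then it is equal to `V`. -/
theorem stmt1 {A : Type*} [NonUnitalCStarAlgebra A] (V : Submodule ℂ A)
    (hV : IsClosed (V : Set A))
    (h : qmul (qmul (V : Set A) (star (V : Set A)) : Set A) (V : Set A) ≤ V) :
    qmul (qmul (V : Set A) (star (V : Set A)) : Set A) (V : Set A) = V :=
  stmt1_general V h
end

section
/- Let A be a C*-algebra, B ⊆ A a commutative norm-closed self-adjoint subalgebra, and n ∈ A a normalizer of B. Then the closure of the linear span of nB equals the closure of the linear span of BnB, and in particular also equals the closure of the linear span of Bn. -/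
open scoped Pointwise

/-!
For `w ∈ A` and `d = w w⋆`, the C⋆-identity gives `‖w - f(d) w‖² = ‖g(d)‖` with
`g t = t (1 - f t)²`; taking `f` close to `1` away from a small neighbourhood of `0` makes this
small. As `f(d)` is a limit of polynomials in `d` without constant term, `w` is a limit of
elements `p(w w⋆) w`, and likewise of elements `w p(w⋆ w)`.

For `w = n c` with `c ∈ B`, the normalizer property puts `w w⋆ = n (c c⋆) n⋆` in `B`, so
`n c` is a limit of elements of `B n B`. Conversely, commutativity of `B` gives
`b (w w⋆) n = (w w⋆) b n = n (c c⋆) (n⋆ b n) ∈ n B` for `b ∈ B`, and this passes to all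
polynomials in `w w⋆`, so `b n c` is a limit of elements of `span (n B)`. The statements about
`B n` are the mirror images.
-/

section

variable {A : Type*} [NonUnitalCStarAlgebra A]

lemma norm_sub_cfcₙ_mul_sq (w : A) {f : ℝ → ℝ} (hf : Continuous f) (hf0 : f 0 = 0) :
    ‖w - cfcₙ f (w * star w) * w‖ ^ 2 = ‖cfcₙ (fun t => t * (1 - f t) ^ 2) (w * star w)‖ := by
  set d := w * star w
  have he : star (cfcₙ f d) = cfcₙ f d := (cfcₙ_predicate f d).star_eq
  have hg : (fun t : ℝ => t * (1 - f t) ^ 2) =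
      fun t => t - f t * t - (t * f t - f t * t * f t) := by
    funext t; ring
  rw [sq, ← CStarRing.norm_self_mul_star, hg, cfcₙ_sub .., cfcₙ_sub .., cfcₙ_sub .., cfcₙ_mul ..,
    cfcₙ_mul .., cfcₙ_mul .., cfcₙ_mul .., cfcₙ_id' ℝ d]
  congr 1
  simp only [star_sub, star_mul, he, d]
  noncomm_ring

lemma abs_mul_one_sub_min_abs_div_sq_le (t : ℝ) {δ : ℝ} (hδ : 0 < δ) :
    |t * (1 - min (|t| / δ) 1) ^ 2| ≤ δ := by
  rw [abs_mul, abs_sq]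
  rcases le_total |t| δ with htδ | hδt
  · have h1 : |t| / δ ≤ 1 := (div_le_one hδ).mpr htδ
    have h0 : 0 ≤ |t| / δ := by positivity
    rw [min_eq_left h1]
    calc |t| * (1 - |t| / δ) ^ 2 ≤ |t| * 1 := by gcongr; nlinarith
      _ ≤ δ := by linarith
  · rw [min_eq_right ((one_le_div hδ).mpr hδt)]
    simpa using hδ.le

lemma exists_norm_sub_cfcₙ_mul_lt (w : A) {ε : ℝ} (hε : 0 < ε) :
    ∃ f : ℝ → ℝ, ‖w - cfcₙ f (w * star w) * w‖ < ε := by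
  -- `|t|` rather than `t`, so that the sign of the spectrum of `w w⋆` never matters
  set f : ℝ → ℝ := fun t => min (|t| / (ε / 2) ^ 2) 1
  refine ⟨f, ?_⟩
  have hsq : ‖w - cfcₙ f (w * star w) * w‖ ^ 2 ≤ (ε / 2) ^ 2 := by
    rw [norm_sub_cfcₙ_mul_sq w (by fun_prop) (by simp [f])]
    exact norm_cfcₙ_le fun t _ => abs_mul_one_sub_min_abs_div_sq_le t (by positivity)
  have := (pow_le_pow_iff_left₀ (norm_nonneg _) (by positivity) two_ne_zero).mp hsq
  linarith

lemma coe_starAdjoin_singleton_of_isSelfAdjoint {d : A} (hd : IsSelfAdjoint d) :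
    (NonUnitalStarAlgebra.adjoin ℝ {d} : Set A) = NonUnitalAlgebra.adjoin ℝ {d} := by
  rw [NonUnitalStarAlgebra.adjoin_eq_starClosure_adjoin, NonUnitalSubalgebra.coe_starClosure,
    NonUnitalSubalgebra.star_adjoin_comm, Set.star_singleton, hd.star_eq, sup_idem]

lemma cfcₙ_mem_closure_adjoin {d : A} (hd : IsSelfAdjoint d) (f : ℝ → ℝ) :
    cfcₙ f d ∈ closure (NonUnitalAlgebra.adjoin ℝ {d} : Set A) := by
  rw [← coe_starAdjoin_singleton_of_isSelfAdjoint hd]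
  exact cfcₙ_mem_elemental f d

lemma mem_closure_adjoin_mul (w : A) :
    w ∈ closure ((· * w) '' (NonUnitalAlgebra.adjoin ℝ {w * star w} : Set A)) := by
  refine closure_minimal (image_closure_subset_closure_image (continuous_mul_const w))
    isClosed_closure (Metric.mem_closure_iff.mpr fun ε hε => ?_)
  obtain ⟨f, hf⟩ := exists_norm_sub_cfcₙ_mul_lt w hε
  exact ⟨_, ⟨_, cfcₙ_mem_closure_adjoin (.mul_star_self w) f, rfl⟩, by rwa [dist_eq_norm]⟩

lemma mem_closure_mul_adjoin (w : A) :
    w ∈ closure ((w * ·) '' (NonUnitalAlgebra.adjoin ℝ {star w * w} : Set A)) := by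
  refine closure_minimal (image_closure_subset_closure_image (continuous_const_mul w))
    isClosed_closure (Metric.mem_closure_iff.mpr fun ε hε => ?_)
  obtain ⟨f, hf⟩ := exists_norm_sub_cfcₙ_mul_lt (star w) hε
  rw [star_star] at hf
  refine ⟨_, ⟨_, cfcₙ_mem_closure_adjoin (.star_mul_self w) f, rfl⟩, ?_⟩
  have he : IsSelfAdjoint (cfcₙ f (star w * w)) := cfcₙ_predicate f _
  rwa [dist_eq_norm, ← norm_star, star_sub, star_mul, he.star_eq]

lemma cspan_le_cspan {S T : Set A} (h : S ⊆ (cspan T : Set A)) : cspan S ≤ cspan T :=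
  Submodule.topologicalClosure_minimal _ (Submodule.span_le.mpr h)
    (Submodule.isClosed_topologicalClosure _)

lemma mem_cspan_of_mem_closure {s T : Set A} {x : A} (hx : x ∈ closure s)
    (hs : s ⊆ Submodule.span ℂ T) : x ∈ cspan T := by
  rw [cspan, ← SetLike.mem_coe, Submodule.topologicalClosure_coe]
  exact closure_mono hs hx

section Normalizer

variable {B : Submodule ℂ A} {n : A}

lemma adjoin_singleton_subset (hmulB : ∀ x ∈ B, ∀ y ∈ B, x * y ∈ B) {d : A} (hd : d ∈ B) :
    (NonUnitalAlgebra.adjoin ℝ {d} : Set A) ⊆ B :=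
  NonUnitalAlgebra.adjoin_le (S := (B.restrictScalars ℝ).toNonUnitalSubalgebra
    fun x y hx hy => hmulB x hx y hy) (Set.singleton_subset_iff.mpr hd)

lemma singleton_mul_subset_cspan_mul_singleton_mul (hmulB : ∀ x ∈ B, ∀ y ∈ B, x * y ∈ B)
    (hstarB : ∀ x ∈ B, star x ∈ B) (hnorm : ∀ b ∈ B, n * b * star n ∈ B) :
    ({n} : Set A) * B ⊆ (cspan ((B : Set A) * {n} * (B : Set A)) : Set A) := by
  rintro _ ⟨m, hm, b, hb, rfl⟩
  rw [Set.mem_singleton_iff] at hm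
  subst m
  have hd : n * b * star (n * b) ∈ B := by
    rw [star_mul, ← mul_assoc, mul_assoc n]
    exact hnorm _ (hmulB _ hb _ (hstarB _ hb))
  refine mem_cspan_of_mem_closure (mem_closure_adjoin_mul (n * b)) ?_
  rintro _ ⟨a, ha, rfl⟩
  exact Submodule.subset_span
    ⟨a * n, ⟨a, adjoin_singleton_subset hmulB hd ha, n, rfl, rfl⟩, b, hb, mul_assoc a n b⟩

lemma mul_singleton_subset_cspan_mul_singleton_mul (hmulB : ∀ x ∈ B, ∀ y ∈ B, x * y ∈ B)
    (hstarB : ∀ x ∈ B, star x ∈ B) (hnorm : ∀ b ∈ B, star n * b * n ∈ B) :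
    (B : Set A) * {n} ⊆ (cspan ((B : Set A) * {n} * (B : Set A)) : Set A) := by
  rintro _ ⟨b, hb, m, hm, rfl⟩
  rw [Set.mem_singleton_iff] at hm
  subst m
  have hd : star (b * n) * (b * n) ∈ B := by
    rw [star_mul, ← mul_assoc, mul_assoc _ (star b)]
    exact hnorm _ (hmulB _ (hstarB _ hb) _ hb)
  refine mem_cspan_of_mem_closure (mem_closure_mul_adjoin (b * n)) ?_
  rintro _ ⟨a, ha, rfl⟩
  exact Submodule.subset_span
    ⟨b * n, ⟨b, hb, n, rfl, rfl⟩, a, adjoin_singleton_subset hmulB hd ha, rfl⟩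

lemma mul_singleton_mul_subset_cspan_singleton_mul (hmulB : ∀ x ∈ B, ∀ y ∈ B, x * y ∈ B)
    (hstarB : ∀ x ∈ B, star x ∈ B) (hcomm : ∀ x ∈ B, ∀ y ∈ B, x * y = y * x)
    (hnorm : ∀ b ∈ B, n * b * star n ∈ B ∧ star n * b * n ∈ B) :
    (B : Set A) * {n} * B ⊆ (cspan (({n} : Set A) * (B : Set A)) : Set A) := by
  rintro _ ⟨_, ⟨b, hb, m, hm, rfl⟩, c, hc, rfl⟩
  rw [Set.mem_singleton_iff] at hm
  subst m
  dsimp only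
  set d := n * c * star (n * c)
  have hd : d = n * (c * star c) * star n := by simp only [d, star_mul, mul_assoc]
  have hdB : d ∈ B := hd ▸ (hnorm _ (hmulB _ hc _ (hstarB _ hc))).1
  have key : ∀ a ∈ NonUnitalAlgebra.adjoin ℝ {d}, ∀ β ∈ B, ∀ γ ∈ B,
      β * a * n * γ ∈ Submodule.span ℂ ({n} * (B : Set A)) := by
    intro a ha
    induction ha using NonUnitalAlgebra.adjoin_induction with
    | mem x hx =>
      intro β hβ γ hγ
      rw [Set.mem_singleton_iff.mp hx, hcomm _ hβ _ hdB, hd]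
      refine Submodule.subset_span ⟨n, rfl, _, hmulB _ (hmulB _ (hmulB _ hc _ (hstarB _ hc)) _
        (hnorm _ hβ).2) _ hγ, ?_⟩
      simp only [mul_assoc]
    | add x y _ _ ihx ihy =>
      intro β hβ γ hγ
      rw [mul_add, add_mul, add_mul]
      exact add_mem (ihx β hβ γ hγ) (ihy β hβ γ hγ)
    | zero => intro β _ γ _; simp
    | mul x y hx _ _ ihy =>
      intro β hβ γ hγ
      rw [← mul_assoc]
      exact ihy _ (hmulB _ hβ _ (adjoin_singleton_subset hmulB hdB hx)) γ hγ
    | smul r x _ ih =>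
      intro β hβ γ hγ
      rw [mul_smul_comm, smul_mul_assoc, smul_mul_assoc]
      exact Submodule.smul_of_tower_mem _ r (ih β hβ γ hγ)
  rw [mul_assoc]
  refine mem_cspan_of_mem_closure (map_mem_closure (continuous_const_mul b)
    (mem_closure_adjoin_mul (n * c)) (Set.mapsTo_image _ _)) ?_
  rintro _ ⟨_, ⟨a, ha, rfl⟩, rfl⟩
  simpa only [mul_assoc, SetLike.mem_coe] using key a ha b hb c hc

lemma mul_singleton_mul_subset_cspan_mul_singleton (hmulB : ∀ x ∈ B, ∀ y ∈ B, x * y ∈ B)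
    (hstarB : ∀ x ∈ B, star x ∈ B) (hcomm : ∀ x ∈ B, ∀ y ∈ B, x * y = y * x)
    (hnorm : ∀ b ∈ B, n * b * star n ∈ B ∧ star n * b * n ∈ B) :
    (B : Set A) * {n} * B ⊆ (cspan ((B : Set A) * ({n} : Set A)) : Set A) := by
  rintro _ ⟨_, ⟨b, hb, m, hm, rfl⟩, c, hc, rfl⟩
  rw [Set.mem_singleton_iff] at hm
  subst m
  dsimp only
  set d := star (b * n) * (b * n)
  have hd : d = star n * (star b * b) * n := by simp only [d, star_mul, mul_assoc]
  have hdB : d ∈ B := hd ▸ (hnorm _ (hmulB _ (hstarB _ hb) _ hb)).2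
  have key : ∀ a ∈ NonUnitalAlgebra.adjoin ℝ {d}, ∀ β ∈ B, ∀ γ ∈ B,
      β * n * a * γ ∈ Submodule.span ℂ ((B : Set A) * {n}) := by
    intro a ha
    induction ha using NonUnitalAlgebra.adjoin_induction with
    | mem x hx =>
      intro β hβ γ hγ
      rw [Set.mem_singleton_iff.mp hx, mul_assoc _ d, hcomm _ hdB _ hγ, hd]
      refine Submodule.subset_span ⟨_, hmulB _ hβ _ (hmulB _ (hnorm _ hγ).1 _
        (hmulB _ (hstarB _ hb) _ hb)), n, rfl, ?_⟩
      simp only [mul_assoc]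
    | add x y _ _ ihx ihy =>
      intro β hβ γ hγ
      rw [mul_add, add_mul]
      exact add_mem (ihx β hβ γ hγ) (ihy β hβ γ hγ)
    | zero => intro β _ γ _; simp
    | mul x y _ hy ihx _ =>
      intro β hβ γ hγ
      rw [← mul_assoc, mul_assoc _ y]
      exact ihx β hβ _ (hmulB _ (adjoin_singleton_subset hmulB hdB hy) _ hγ)
    | smul r x _ ih =>
      intro β hβ γ hγ
      rw [mul_smul_comm, smul_mul_assoc]
      exact Submodule.smul_of_tower_mem _ r (ih β hβ γ hγ)
  refine mem_cspan_of_mem_closure (map_mem_closure (f := (· * c)) (continuous_mul_const c)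
    (mem_closure_mul_adjoin (b * n)) (Set.mapsTo_image _ _)) ?_
  rintro _ ⟨_, ⟨a, ha, rfl⟩, rfl⟩
  simpa only [mul_assoc, SetLike.mem_coe] using key a ha b hb c hc

end Normalizer

end

theorem stmt11_general {A : Type*} [NonUnitalCStarAlgebra A] (B : Submodule ℂ A)
    (hmulB : ∀ x ∈ B, ∀ y ∈ B, x * y ∈ B)
    (hstarB : ∀ x ∈ B, star x ∈ B)
    (hcomm : ∀ x ∈ B, ∀ y ∈ B, x * y = y * x)
    (n : A) (hnorm : ∀ b ∈ B, n * b * star n ∈ B ∧ star n * b * n ∈ B) :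
    cspan (({n} : Set A) * (B : Set A)) = cspan ((B : Set A) * {n} * (B : Set A)) ∧
    cspan ((B : Set A) * ({n} : Set A)) = cspan ((B : Set A) * {n} * (B : Set A)) :=
  ⟨le_antisymm
    (cspan_le_cspan (singleton_mul_subset_cspan_mul_singleton_mul hmulB hstarB
      fun b hb => (hnorm b hb).1))
    (cspan_le_cspan (mul_singleton_mul_subset_cspan_singleton_mul hmulB hstarB hcomm hnorm)),
  le_antisymm
    (cspan_le_cspan (mul_singleton_subset_cspan_mul_singleton_mul hmulB hstarB
      fun b hb => (hnorm b hb).2))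
    (cspan_le_cspan (mul_singleton_mul_subset_cspan_mul_singleton hmulB hstarB hcomm hnorm))⟩

/-- For a commutative norm-closed self-adjoint subalgebra `B ⊆ A` and a normalizer `n`
of `B`, the closed linear span of `nB` equals the closed linear span of `BnB`, and in
particular also equals the closed linear span of `Bn`. -/
theorem stmt11 {A : Type*} [NonUnitalCStarAlgebra A] (B : Submodule ℂ A)
    (hclosed : IsClosed (B : Set A))
    (hmulB : ∀ x ∈ B, ∀ y ∈ B, x * y ∈ B)
    (hstarB : ∀ x ∈ B, star x ∈ B)
    (hcomm : ∀ x ∈ B, ∀ y ∈ B, x * y = y * x)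
    (n : A) (hnorm : ∀ b ∈ B, n * b * star n ∈ B ∧ star n * b * n ∈ B) :
    cspan (({n} : Set A) * (B : Set A)) = cspan ((B : Set A) * {n} * (B : Set A)) ∧
    cspan ((B : Set A) * ({n} : Set A)) = cspan ((B : Set A) * {n} * (B : Set A)) :=
  stmt11_general B hmulB hstarB hcomm n hnorm
end
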